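/- For a finite lattice L, let u and v be the smallest and largest elements of Skel L. Then the interval K = [u,v]_L is a lattice whose bottom element is meet-reducible in K, whose top element is join-reducible in K, and cd(K) = cd(L). -/
import Mathlib


/-- A congruence of a lattice: an equivalence relation compatible with `⊔` and `⊓`. -/
structure LatCon (L : Type) [Lattice L] : Type where
  r : L → L → Prop
  refl : ∀ a, r a a
  symm : ∀ {a b}, r a b → r b a
  trans : ∀ {a b c}, r a b → r b c → r a c
  sup : ∀ {a b c d}, r a b → r c d → r (a ⊔ c) (b ⊔ d)
  inf : ∀ {a b c d}, r a b → r c d → r (a ⊓ c) (b ⊓ d)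

/-- The congruence density of a finite lattice `L`. -/
noncomputable def latCd (L : Type) [Lattice L] : ℝ :=
  (Nat.card (LatCon L) : ℝ) / 2 ^ (Nat.card L - 1)

/-- The set of join-reducible elements: elements with at least two lower covers. -/
def Jr (L : Type) [Lattice L] : Set L := {x | ∃ y z, y ⋖ x ∧ z ⋖ x ∧ y ≠ z}

/-- The set of meet-reducible elements: elements with at least two upper covers. -/
def Mr (L : Type) [Lattice L] : Set L := {x | ∃ y z, x ⋖ y ∧ x ⋖ z ∧ y ≠ z}

/-- The skeleton of `L`. -/
def Skel (L : Type) [Lattice L] : Set L :=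
  Jr L ∪ Mr L ∪ {y | ∃ x ∈ Jr L, y ⋖ x} ∪ {y | ∃ x ∈ Mr L, x ⋖ y}

set_option linter.unusedSectionVars false

namespace LatCon

variable {L M : Type} [Lattice L] [Lattice M]

theorem ext' {θ θ' : LatCon L} (h : θ.r = θ'.r) : θ = θ' := by
  cases θ; cases θ'; cases h; rfl

theorem r_inf_sup (θ : LatCon L) {a b : L} (h : θ.r a b) : θ.r (a ⊓ b) (a ⊔ b) := by
  have h1 : θ.r (a ⊓ b) b := by simpa using θ.inf h (θ.refl b)
  have h2 : θ.r (a ⊔ b) b := by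
    have := θ.sup h (θ.refl b)
    simpa using this
  exact θ.trans h1 (θ.symm h2)

theorem of_inf_sup (θ : LatCon L) {a b : L} (h : θ.r (a ⊓ b) (a ⊔ b)) : θ.r a b := by
  have h1 : θ.r a (a ⊔ b) := by
    have := θ.sup (θ.refl a) h
    simpa [sup_inf_self, ← sup_assoc] using this
  have h2 : θ.r b (a ⊔ b) := by
    have := θ.sup (θ.refl b) h
    have e1 : b ⊔ (a ⊓ b) = b := sup_eq_left.mpr inf_le_right
    have e2 : b ⊔ (a ⊔ b) = a ⊔ b := by
      rw [sup_comm a b, ← sup_assoc, sup_idem]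
    rwa [e1, e2] at this
  exact θ.trans h1 (θ.symm h2)

theorem sandwich (θ : LatCon L) {a b c d : L} (h : θ.r a b) (hac : a ≤ c) (hcd : c ≤ d)
    (hdb : d ≤ b) : θ.r c d := by
  have h1 : θ.r c b := by
    have := θ.sup h (θ.refl c)
    rwa [sup_eq_right.mpr hac, sup_eq_left.mpr (hcd.trans hdb)] at this
  have := θ.inf h1 (θ.refl d)
  rwa [inf_eq_left.mpr hcd, inf_eq_right.mpr hdb] at this

/-- Transport a congruence along an order isomorphism. -/
def congr (e : L ≃o M) : LatCon L ≃ LatCon M where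
  toFun θ :=
    { r := fun a b => θ.r (e.symm a) (e.symm b)
      refl := fun a => θ.refl _
      symm := fun h => θ.symm h
      trans := fun h1 h2 => θ.trans h1 h2
      sup := fun h1 h2 => by
        show θ.r (e.symm _) (e.symm _); rw [e.symm.map_sup, e.symm.map_sup]; exact θ.sup h1 h2
      inf := fun h1 h2 => by
        show θ.r (e.symm _) (e.symm _); rw [e.symm.map_inf, e.symm.map_inf]; exact θ.inf h1 h2 }
  invFun θ :=
    { r := fun a b => θ.r (e a) (e b)
      refl := fun a => θ.refl _
      symm := fun h => θ.symm h
      trans := fun h1 h2 => θ.trans h1 h2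
      sup := fun h1 h2 => by
        show θ.r (e _) (e _); rw [e.map_sup, e.map_sup]; exact θ.sup h1 h2
      inf := fun h1 h2 => by
        show θ.r (e _) (e _); rw [e.map_inf, e.map_inf]; exact θ.inf h1 h2 }
  left_inv θ := by apply ext'; funext a b; simp
  right_inv θ := by apply ext'; funext a b; simp

end LatCon

section FinChain

lemma Fin.val_sup' {m : ℕ} (a b : Fin m) : ((a ⊔ b : Fin m) : ℕ) = max a.val b.val := by
  rcases le_total a b with h | h
  · rw [sup_eq_right.mpr h, Nat.max_eq_right (Fin.le_def.mp h)]
  · rw [sup_eq_left.mpr h, Nat.max_eq_left (Fin.le_def.mp h)]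

lemma Fin.val_inf' {m : ℕ} (a b : Fin m) : ((a ⊓ b : Fin m) : ℕ) = min a.val b.val := by
  rcases le_total a b with h | h
  · rw [inf_eq_left.mpr h, Nat.min_eq_left (Fin.le_def.mp h)]
  · rw [inf_eq_right.mpr h, Nat.min_eq_right (Fin.le_def.mp h)]

private theorem finchain_step {n : ℕ} (θ : LatCon (Fin (n+1))) :
    ∀ (k : ℕ) (x y : Fin (n+1)), y.val = x.val + k →
      (∀ i : Fin n, x.val ≤ i.val → i.val < y.val → θ.r i.castSucc i.succ) → θ.r x y := by
  intro k
  induction k with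
  | zero =>
    intro x y hy _
    have : x = y := Fin.ext (by omega)
    subst this; exact θ.refl x
  | succ k ih =>
    intro x y hy hcov
    have hxn : x.val < n := by have := y.isLt; omega
    set i : Fin n := ⟨x.val, hxn⟩ with hi
    have h0 : θ.r i.castSucc i.succ := hcov i (le_refl _) (by simp [hi]; omega)
    have h1 : θ.r i.succ y :=
      ih i.succ y (by simp [hi, Fin.val_succ]; omega)
        (fun j hj hj' => hcov j (by simp [hi, Fin.val_succ] at hj ⊢; omega) hj')
    have hx : i.castSucc = x := Fin.ext (by simp [hi])
    exact hx ▸ θ.trans h0 h1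

noncomputable def finLatConEquiv (n : ℕ) : LatCon (Fin (n+1)) ≃ (Fin n → Prop) where
  toFun := fun θ i => θ.r i.castSucc i.succ
  invFun := fun f =>
    { r := fun a b => ∀ i : Fin n,
        min a.val b.val ≤ i.val → i.val < max a.val b.val → f i
      refl := fun a i h1 h2 => by omega
      symm := fun {a b} h i h1 h2 => h i (by omega) (by omega)
      trans := fun {a b c} hab hbc i h1 h2 => by
        rcases (by omega :
            (min a.val b.val ≤ i.val ∧ i.val < max a.val b.val) ∨
            (min b.val c.val ≤ i.val ∧ i.val < max b.val c.val)) with h | h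
        · exact hab i h.1 h.2
        · exact hbc i h.1 h.2
      sup := fun {a b c d} hab hcd i h1 h2 => by
        rw [Fin.val_sup', Fin.val_sup'] at h1 h2
        rcases (by omega :
            (min a.val b.val ≤ i.val ∧ i.val < max a.val b.val) ∨
            (min c.val d.val ≤ i.val ∧ i.val < max c.val d.val)) with h | h
        · exact hab i h.1 h.2
        · exact hcd i h.1 h.2
      inf := fun {a b c d} hab hcd i h1 h2 => by
        rw [Fin.val_inf', Fin.val_inf'] at h1 h2
        rcases (by omega :
            (min a.val b.val ≤ i.val ∧ i.val < max a.val b.val) ∨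
            (min c.val d.val ≤ i.val ∧ i.val < max c.val d.val)) with h | h
        · exact hab i h.1 h.2
        · exact hcd i h.1 h.2 }
  left_inv := by
    intro θ
    apply LatCon.ext'
    funext a b
    apply propext
    constructor
    · intro h
      have key : θ.r (a ⊓ b) (a ⊔ b) := by
        apply finchain_step θ ((a ⊔ b).val - (a ⊓ b).val)
        · have : (a ⊓ b).val ≤ (a ⊔ b).val := Fin.le_def.mp (inf_le_sup)
          omega
        · intro i hi1 hi2
          rw [Fin.val_inf'] at hi1
          rw [Fin.val_sup'] at hi2
          exact h i (by omega) (by omega)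
      exact θ.of_inf_sup key
    · intro h i h1 h2
      refine θ.sandwich (θ.r_inf_sup h) ?_ ?_ ?_
      · rw [Fin.le_def, Fin.val_inf', Fin.coe_castSucc]; omega
      · rw [Fin.le_def]; simp
      · rw [Fin.le_def, Fin.val_sup', Fin.val_succ]; omega
  right_inv := by
    intro f
    funext i
    have hmin : min i.castSucc.val i.succ.val = i.val := by
      simp [Fin.val_succ]
    have hmax : max i.castSucc.val i.succ.val = i.val + 1 := by
      simp [Fin.val_succ]
    apply propext
    constructor
    · intro h
      exact h i (by omega) (by omega)
    · intro h j hj1 hj2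
      rw [hmin] at hj1; rw [hmax] at hj2
      have : j = i := Fin.ext (by omega)
      rw [this]; exact h

theorem card_latCon_fin (n : ℕ) : Nat.card (LatCon (Fin (n+1))) = 2 ^ n := by
  rw [Nat.card_congr (finLatConEquiv n),
    Nat.card_congr (Equiv.arrowCongr (Equiv.refl (Fin n)) Equiv.propEquivBool)]
  simp [Nat.card_eq_fintype_card]

theorem card_latCon_chain (C : Type) [Lattice C] [Finite C] [Nonempty C]
    (htot : ∀ a b : C, a ≤ b ∨ b ≤ a) : Nat.card (LatCon C) = 2 ^ (Nat.card C - 1) := by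
  classical
  letI : Fintype C := Fintype.ofFinite C
  letI : IsTotal C (· ≤ ·) := ⟨htot⟩
  letI : LinearOrder C := Lattice.toLinearOrder C
  obtain ⟨m, hm⟩ : ∃ m, Fintype.card C = m + 1 :=
    ⟨Fintype.card C - 1, (Nat.succ_pred_eq_of_pos Fintype.card_pos).symm⟩
  have e : Fin (m+1) ≃o C := Fintype.orderIsoFinOfCardEq C hm
  rw [Nat.card_congr (LatCon.congr e.symm), card_latCon_fin, Nat.card_eq_fintype_card, hm, Nat.add_sub_cancel]
section Main

variable {L : Type} [Lattice L]


lemma mem_skel_of_jr {x : L} (h : x ∈ Jr L) : x ∈ Skel L := Or.inl (Or.inl (Or.inl h))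
lemma mem_skel_of_mr {x : L} (h : x ∈ Mr L) : x ∈ Skel L := Or.inl (Or.inl (Or.inr h))
lemma mem_skel_of_lower {x y : L} (hx : x ∈ Jr L) (h : y ⋖ x) : y ∈ Skel L :=
  Or.inl (Or.inr ⟨x, hx, h⟩)
lemma mem_skel_of_upper {x y : L} (hx : x ∈ Mr L) (h : x ⋖ y) : y ∈ Skel L :=
  Or.inr ⟨x, hx, h⟩

variable [Finite L] {u v : L}

lemma comp_u (hu : IsLeast (Skel L) u) : ∀ x : L, x ≤ u ∨ u ≤ x := by
  intro x
  induction x using (wellFounded_gt (α := L)).induction with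
  | _ x ih =>
  by_cases hxu : x ≤ u
  · exact Or.inl hxu
  by_cases hux : u ≤ x
  · exact Or.inr hux
  exfalso
  have hlt : x < x ⊔ u := left_lt_sup.mpr hux
  obtain ⟨t, hxt, htle⟩ := hlt.exists_covby_le
  have hut : u ≤ t := by
    rcases ih t hxt.lt with h | h
    · exact absurd (hxt.lt.trans_le h).le hxu
    · exact h
  have hult : u < t := lt_of_le_of_ne hut (fun h => hxu (h ▸ hxt.lt).le)
  obtain ⟨s, hus, hst⟩ := hult.exists_le_covby
  have hsx : s ≠ x := fun h => hux (h ▸ hus)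
  have htJr : t ∈ Jr L := ⟨x, s, hxt, hst, fun h => hsx h.symm⟩
  exact hux (hu.2 (mem_skel_of_lower htJr hxt))

lemma comp_v (hv : IsGreatest (Skel L) v) : ∀ x : L, x ≤ v ∨ v ≤ x := by
  intro x
  induction x using (wellFounded_lt (α := L)).induction with
  | _ x ih =>
  by_cases hxv : x ≤ v
  · exact Or.inl hxv
  by_cases hvx : v ≤ x
  · exact Or.inr hvx
  exfalso
  have hlt : x ⊓ v < x := inf_lt_left.mpr hxv
  obtain ⟨t, hle, htx⟩ := hlt.exists_le_covby
  have htv : t ≤ v := by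
    rcases ih t htx.lt with h | h
    · exact h
    · exact absurd (h.trans htx.lt.le) hvx
  have hlt2 : t < v := lt_of_le_of_ne htv (fun h => hvx ((h ▸ htx).lt.le))
  obtain ⟨w, htw, hwv⟩ := hlt2.exists_covby_le
  have hwx : w ≠ x := fun h => hxv (h ▸ hwv)
  have htMr : t ∈ Mr L := ⟨x, w, htx, htw, fun h => hwx h.symm⟩
  exact hxv (hv.2 (mem_skel_of_upper htMr htx))

lemma chain_below (hu : IsLeast (Skel L) u) :
    ∀ x y : L, x ≤ u → y ≤ u → x ≤ y ∨ y ≤ x := by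
  intro x y hxu hyu
  by_cases hxy : x ≤ y
  · exact Or.inl hxy
  by_cases hyx : y ≤ x
  · exact Or.inr hyx
  exfalso
  have hx : x < x ⊔ y := left_lt_sup.mpr hyx
  have hy : y < x ⊔ y := right_lt_sup.mpr hxy
  obtain ⟨a, hxa, ha⟩ := hx.exists_le_covby
  obtain ⟨b, hyb, hb⟩ := hy.exists_le_covby
  have hab : a ≠ b := by
    rintro rfl
    exact absurd (sup_le hxa hyb) ha.lt.not_ge
  have hJr : x ⊔ y ∈ Jr L := ⟨a, b, ha, hb, hab⟩
  have haS : a ∈ Skel L := mem_skel_of_lower hJr ha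
  exact ((hu.2 haS).trans_lt (ha.lt.trans_le (sup_le hxu hyu))).false

lemma chain_above (hv : IsGreatest (Skel L) v) :
    ∀ x y : L, v ≤ x → v ≤ y → x ≤ y ∨ y ≤ x := by
  intro x y hvx hvy
  by_cases hxy : x ≤ y
  · exact Or.inl hxy
  by_cases hyx : y ≤ x
  · exact Or.inr hyx
  exfalso
  have hx : x ⊓ y < x := inf_lt_left.mpr hxy
  have hy : x ⊓ y < y := inf_lt_right.mpr hyx
  obtain ⟨a, ha, hax⟩ := hx.exists_covby_le
  obtain ⟨b, hb, hby⟩ := hy.exists_covby_le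
  have hab : a ≠ b := by
    rintro rfl
    exact absurd (le_inf hax hby) ha.lt.not_ge
  have hMr : x ⊓ y ∈ Mr L := ⟨a, b, ha, hb, hab⟩
  have haS : a ∈ Skel L := mem_skel_of_upper hMr ha
  have : a ≤ x ⊓ y := (hv.2 haS).trans (le_inf hvx hvy)
  exact ha.lt.not_ge this

end Main

section Main2

variable {L : Type} [Lattice L] [Finite L] {u v : L}

lemma u_mem_mr (hu : IsLeast (Skel L) u) : u ∈ Mr L := by
  rcases hu.1 with ((h | h) | h) | h
  · -- u ∈ Jr
    obtain ⟨y, z, hy, hz, hne⟩ := id h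
    exact absurd (hu.2 (mem_skel_of_lower h hy)) hy.lt.not_ge
  · exact h
  · -- u is a lower cover of some x ∈ Jr
    obtain ⟨x, hxJr, hux⟩ := h
    obtain ⟨y, z, hy, hz, hne⟩ := id hxJr
    exfalso
    have key : ∀ w : L, w ⋖ x → w ≠ u → False := by
      intro w hw hwu
      have hwS : w ∈ Skel L := mem_skel_of_lower hxJr hw
      have huw : u < w := lt_of_le_of_ne (hu.2 hwS) (Ne.symm hwu)
      exact hux.2 huw hw.lt
    by_cases hyu : y = u
    · exact key z hz (fun h => hne (hyu.trans h.symm))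
    · exact key y hy hyu
  · -- u is an upper cover of some x ∈ Mr
    obtain ⟨x, hxMr, hxu⟩ := h
    exact absurd (hu.2 (mem_skel_of_mr hxMr)) hxu.lt.not_ge

lemma v_mem_jr (hv : IsGreatest (Skel L) v) : v ∈ Jr L := by
  rcases hv.1 with ((h | h) | h) | h
  · exact h
  · obtain ⟨y, z, hy, hz, hne⟩ := id h
    exfalso
    exact hy.lt.not_ge (hv.2 (mem_skel_of_upper h hy))
  · -- v is a lower cover of some x ∈ Jr
    obtain ⟨x, hxJr, hvx⟩ := h
    exact absurd (hv.2 (mem_skel_of_jr hxJr)) hvx.lt.not_ge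
  · -- v is an upper cover of some x ∈ Mr
    obtain ⟨x, hxMr, hxv⟩ := h
    obtain ⟨y, z, hy, hz, hne⟩ := id hxMr
    exfalso
    have key : ∀ w : L, x ⋖ w → w ≠ v → False := by
      intro w hw hwv
      have hwS : w ∈ Skel L := mem_skel_of_upper hxMr hw
      have hwv' : w < v := lt_of_le_of_ne (hv.2 hwS) hwv
      exact hxv.2 hw.lt hwv'
    by_cases hyv : y = v
    · exact key z hz (fun h => hne (hyv.trans h.symm))
    · exact key y hy hyv

end Main2

section Main3

variable {L : Type} [Lattice L] {u v : L}

lemma sup_inf_hom (hc : ∀ x : L, x ≤ u ∨ u ≤ x) (a b : L) :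
    (a ⊔ b) ⊓ u = (a ⊓ u) ⊔ (b ⊓ u) := by
  rcases hc a with ha | ha
  · rcases hc b with hb | hb
    · rw [inf_eq_left.mpr (sup_le ha hb), inf_eq_left.mpr ha, inf_eq_left.mpr hb]
    · rw [inf_eq_right.mpr (hb.trans le_sup_right), inf_eq_right.mpr hb,
        sup_eq_right.mpr inf_le_right]
  · rw [inf_eq_right.mpr (ha.trans le_sup_left), inf_eq_right.mpr ha,
      sup_eq_left.mpr inf_le_right]

lemma inf_sup_hom (hc : ∀ x : L, x ≤ u ∨ u ≤ x) (a b : L) :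
    (a ⊓ b) ⊔ u = (a ⊔ u) ⊓ (b ⊔ u) := by
  rcases hc a with ha | ha
  · rw [sup_eq_right.mpr (inf_le_left.trans ha), sup_eq_right.mpr ha,
      inf_eq_left.mpr le_sup_right]
  · rcases hc b with hb | hb
    · rw [sup_eq_right.mpr (inf_le_right.trans hb), sup_eq_right.mpr hb,
        inf_eq_right.mpr le_sup_right]
    · rw [sup_eq_left.mpr (le_inf ha hb), sup_eq_left.mpr ha, sup_eq_left.mpr hb]

/-- projection to `Iic u`. -/
def pIic (u : L) (x : L) : Set.Iic u := ⟨x ⊓ u, inf_le_right⟩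
/-- projection to `Icc u v`. -/
def pIcc (huv : u ≤ v) (x : L) : Set.Icc u v :=
  ⟨(x ⊔ u) ⊓ v, le_inf le_sup_right huv, inf_le_right⟩
/-- projection to `Ici v`. -/
def pIci (v : L) (x : L) : Set.Ici v := ⟨x ⊔ v, le_sup_right⟩

lemma pIic_sup (hcu : ∀ x : L, x ≤ u ∨ u ≤ x) (a b : L) :
    pIic u (a ⊔ b) = pIic u a ⊔ pIic u b :=
  Subtype.ext (sup_inf_hom hcu a b)

lemma pIic_inf (a b : L) : pIic u (a ⊓ b) = pIic u a ⊓ pIic u b :=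
  Subtype.ext (inf_inf_distrib_right a b u)

lemma pIci_sup (a b : L) : pIci v (a ⊔ b) = pIci v a ⊔ pIci v b :=
  Subtype.ext (sup_sup_distrib_right a b v)

lemma pIci_inf (hcv : ∀ x : L, x ≤ v ∨ v ≤ x) (a b : L) :
    pIci v (a ⊓ b) = pIci v a ⊓ pIci v b :=
  Subtype.ext (inf_sup_hom hcv a b)

lemma pIcc_sup (huv : u ≤ v) (hcv : ∀ x : L, x ≤ v ∨ v ≤ x) (a b : L) :
    pIcc huv (a ⊔ b) = pIcc huv a ⊔ pIcc huv b :=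
  Subtype.ext (by
    show (a ⊔ b ⊔ u) ⊓ v = ((a ⊔ u) ⊓ v) ⊔ ((b ⊔ u) ⊓ v)
    rw [sup_sup_distrib_right a b u, sup_inf_hom hcv])

lemma pIcc_inf (huv : u ≤ v) (hcu : ∀ x : L, x ≤ u ∨ u ≤ x) (a b : L) :
    pIcc huv (a ⊓ b) = pIcc huv a ⊓ pIcc huv b :=
  Subtype.ext (by
    show (a ⊓ b ⊔ u) ⊓ v = ((a ⊔ u) ⊓ v) ⊓ ((b ⊔ u) ⊓ v)
    rw [inf_sup_hom hcu, inf_inf_distrib_right])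

end Main3

section Main4

variable {L : Type} [Lattice L] {u v : L}

/-- Restrict a congruence to `Iic u`. -/
def resIic (θ : LatCon L) : LatCon (Set.Iic u) where
  r a b := θ.r a.val b.val
  refl a := θ.refl _
  symm h := θ.symm h
  trans h h' := θ.trans h h'
  sup h h' := θ.sup h h'
  inf h h' := θ.inf h h'

/-- Restrict a congruence to `Icc u v`. -/
def resIcc (θ : LatCon L) : LatCon (Set.Icc u v) where
  r a b := θ.r a.val b.val
  refl a := θ.refl _
  symm h := θ.symm h
  trans h h' := θ.trans h h'
  sup h h' := θ.sup h h'
  inf h h' := θ.inf h h'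

/-- Restrict a congruence to `Ici v`. -/
def resIci (θ : LatCon L) : LatCon (Set.Ici v) where
  r a b := θ.r a.val b.val
  refl a := θ.refl _
  symm h := θ.symm h
  trans h h' := θ.trans h h'
  sup h h' := θ.sup h h'
  inf h h' := θ.inf h h'

/-- Combine congruences of the three pieces into one of `L`. -/
def combine (huv : u ≤ v) (hcu : ∀ x : L, x ≤ u ∨ u ≤ x) (hcv : ∀ x : L, x ≤ v ∨ v ≤ x)
    (θ1 : LatCon (Set.Iic u)) (θK : LatCon (Set.Icc u v)) (θ2 : LatCon (Set.Ici v)) :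
    LatCon L where
  r a b := θ1.r (pIic u a) (pIic u b) ∧ θK.r (pIcc huv a) (pIcc huv b) ∧
    θ2.r (pIci v a) (pIci v b)
  refl a := ⟨θ1.refl _, θK.refl _, θ2.refl _⟩
  symm h := ⟨θ1.symm h.1, θK.symm h.2.1, θ2.symm h.2.2⟩
  trans h h' := ⟨θ1.trans h.1 h'.1, θK.trans h.2.1 h'.2.1, θ2.trans h.2.2 h'.2.2⟩
  sup {a b c d} h h' := by
    refine ⟨?_, ?_, ?_⟩
    · rw [pIic_sup hcu, pIic_sup hcu]; exact θ1.sup h.1 h'.1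
    · rw [pIcc_sup huv hcv, pIcc_sup huv hcv]; exact θK.sup h.2.1 h'.2.1
    · rw [pIci_sup, pIci_sup]; exact θ2.sup h.2.2 h'.2.2
  inf {a b c d} h h' := by
    refine ⟨?_, ?_, ?_⟩
    · rw [pIic_inf, pIic_inf]; exact θ1.inf h.1 h'.1
    · rw [pIcc_inf huv hcu, pIcc_inf huv hcu]; exact θK.inf h.2.1 h'.2.1
    · rw [pIci_inf hcv, pIci_inf hcv]; exact θ2.inf h.2.2 h'.2.2

private lemma ordered_glue (θ : LatCon L) (huv : u ≤ v)
    (hcu : ∀ x : L, x ≤ u ∨ u ≤ x) (hcv : ∀ x : L, x ≤ v ∨ v ≤ x) {a b : L} (hab : a ≤ b)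
    (h1 : θ.r (a ⊓ u) (b ⊓ u)) (h2 : θ.r ((a ⊔ u) ⊓ v) ((b ⊔ u) ⊓ v))
    (h3 : θ.r (a ⊔ v) (b ⊔ v)) : θ.r a b := by
  rcases hcu b with hbu | hbu
  · -- b ≤ u, hence a ≤ u
    rwa [inf_eq_left.mpr (hab.trans hbu), inf_eq_left.mpr hbu] at h1
  · rcases hcv a with hav | hav
    · rcases hcu a with hau | hau
      · -- a ≤ u ≤ b
        rw [inf_eq_left.mpr hau, inf_eq_right.mpr hbu] at h1
        -- h1 : θ.r a u
        rw [sup_eq_right.mpr hau, inf_eq_left.mpr huv, sup_eq_left.mpr hbu] at h2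
        -- h2 : θ.r u (b ⊓ v)
        rcases hcv b with hbv | hbv
        · rw [inf_eq_left.mpr hbv] at h2
          exact θ.trans h1 h2
        · rw [inf_eq_right.mpr hbv] at h2
          rw [sup_eq_right.mpr hav, sup_eq_left.mpr hbv] at h3
          exact θ.trans h1 (θ.trans h2 h3)
      · -- u ≤ a, a ≤ v
        rw [sup_eq_left.mpr hau, inf_eq_left.mpr hav, sup_eq_left.mpr hbu] at h2
        rcases hcv b with hbv | hbv
        · rwa [inf_eq_left.mpr hbv] at h2
        · rw [inf_eq_right.mpr hbv] at h2
          rw [sup_eq_right.mpr hav, sup_eq_left.mpr hbv] at h3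
          exact θ.trans h2 h3
    · -- v ≤ a ≤ b
      rwa [sup_eq_left.mpr hav, sup_eq_left.mpr (hav.trans hab)] at h3

/-- The decomposition of congruences of `L`. -/
noncomputable def triEquiv (huv : u ≤ v) (hcu : ∀ x : L, x ≤ u ∨ u ≤ x)
    (hcv : ∀ x : L, x ≤ v ∨ v ≤ x) :
    LatCon L ≃ LatCon (Set.Iic u) × LatCon (Set.Icc u v) × LatCon (Set.Ici v) where
  toFun θ := (resIic θ, resIcc θ, resIci θ)
  invFun Θ := combine huv hcu hcv Θ.1 Θ.2.1 Θ.2.2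
  left_inv θ := by
    apply LatCon.ext'
    funext a b
    apply propext
    constructor
    · rintro ⟨h1, h2, h3⟩
      -- h1 : θ.r (a ⊓ u) (b ⊓ u) etc.
      apply θ.of_inf_sup
      have h1' : θ.r ((a ⊓ u) ⊓ (b ⊓ u)) ((a ⊓ u) ⊔ (b ⊓ u)) := θ.r_inf_sup h1
      rw [← inf_inf_distrib_right, ← sup_inf_hom hcu] at h1'
      have h2' : θ.r (((a ⊔ u) ⊓ v) ⊓ ((b ⊔ u) ⊓ v)) (((a ⊔ u) ⊓ v) ⊔ ((b ⊔ u) ⊓ v)) :=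
        θ.r_inf_sup h2
      rw [← inf_inf_distrib_right, ← inf_sup_hom hcu, ← sup_inf_hom hcv,
        ← sup_sup_distrib_right] at h2'
      have h3' : θ.r ((a ⊔ v) ⊓ (b ⊔ v)) ((a ⊔ v) ⊔ (b ⊔ v)) := θ.r_inf_sup h3
      rw [← inf_sup_hom hcv, ← sup_sup_distrib_right] at h3'
      exact ordered_glue θ huv hcu hcv inf_le_sup h1' h2' h3'
    · intro h
      exact ⟨θ.inf h (θ.refl u), θ.inf (θ.sup h (θ.refl u)) (θ.refl v), θ.sup h (θ.refl v)⟩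
  right_inv := by
    rintro ⟨θ1, θK, θ2⟩
    refine Prod.ext ?_ (Prod.ext ?_ ?_)
    · apply LatCon.ext'
      funext a b
      apply propext
      have ea : pIic u a.val = a := Subtype.ext (inf_eq_left.mpr a.2)
      have eb : pIic u b.val = b := Subtype.ext (inf_eq_left.mpr b.2)
      constructor
      · rintro ⟨h1, -, -⟩
        rwa [ea, eb] at h1
      · intro h
        refine ⟨by rwa [ea, eb], ?_, ?_⟩
        · have e1 : ∀ x : Set.Iic u, pIcc huv x.val = ⟨u, le_refl u, huv⟩ := fun x =>
            Subtype.ext (by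
              show (x.val ⊔ u) ⊓ v = u
              rw [sup_eq_right.mpr x.2, inf_eq_left.mpr huv])
          rw [e1 a, e1 b]; exact θK.refl _
        · have e2 : ∀ x : Set.Iic u, pIci v x.val = ⟨v, le_refl v⟩ := fun x =>
            Subtype.ext (sup_eq_right.mpr (x.2.trans huv))
          rw [e2 a, e2 b]; exact θ2.refl _
    · apply LatCon.ext'
      funext a b
      apply propext
      have ea : pIcc huv a.val = a := Subtype.ext (by
        show (a.val ⊔ u) ⊓ v = a.val
        rw [sup_eq_left.mpr a.2.1, inf_eq_left.mpr a.2.2])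
      have eb : pIcc huv b.val = b := Subtype.ext (by
        show (b.val ⊔ u) ⊓ v = b.val
        rw [sup_eq_left.mpr b.2.1, inf_eq_left.mpr b.2.2])
      constructor
      · rintro ⟨-, h2, -⟩
        rwa [ea, eb] at h2
      · intro h
        refine ⟨?_, by rwa [ea, eb], ?_⟩
        · have e1 : ∀ x : Set.Icc u v, pIic u x.val = ⟨u, le_refl u⟩ := fun x =>
            Subtype.ext (inf_eq_right.mpr x.2.1)
          rw [e1 a, e1 b]; exact θ1.refl _
        · have e2 : ∀ x : Set.Icc u v, pIci v x.val = ⟨v, le_refl v⟩ := fun x =>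
            Subtype.ext (sup_eq_right.mpr x.2.2)
          rw [e2 a, e2 b]; exact θ2.refl _
    · apply LatCon.ext'
      funext a b
      apply propext
      have ea : pIci v a.val = a := Subtype.ext (sup_eq_left.mpr a.2)
      have eb : pIci v b.val = b := Subtype.ext (sup_eq_left.mpr b.2)
      constructor
      · rintro ⟨-, -, h3⟩
        rwa [ea, eb] at h3
      · intro h
        refine ⟨?_, ?_, by rwa [ea, eb]⟩
        · have e1 : ∀ x : Set.Ici v, pIic u x.val = ⟨u, le_refl u⟩ := fun x =>
            Subtype.ext (inf_eq_right.mpr (huv.trans x.2))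
          rw [e1 a, e1 b]; exact θ1.refl _
        · have e2 : ∀ x : Set.Ici v, pIcc huv x.val = ⟨v, huv, le_refl v⟩ := fun x =>
            Subtype.ext (by
              show (x.val ⊔ u) ⊓ v = v
              rw [sup_eq_left.mpr (huv.trans x.2), inf_eq_right.mpr x.2])
          rw [e2 a, e2 b]; exact θK.refl _

end Main4

section Main5

variable {L : Type} [Lattice L] [Finite L] {u v : L}


/-- Let `u` and `v` be the smallest and largest elements of `Skel L`, for a finite lattice
`L`.  Then in the interval lattice `K = [u,v]_L`, the bottom element `u` is meet-reducible
and the top element `v` is join-reducible, and `cd K = cd L`. -/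
theorem trunc_to_skel_bounds (L : Type) [Lattice L] [Finite L] (u v : L)
    (hu : IsLeast (Skel L) u) (hv : IsGreatest (Skel L) v) :
    ((⟨u, Set.left_mem_Icc.mpr (hv.2 hu.1)⟩ : Set.Icc u v) ∈ Mr (Set.Icc u v)) ∧
      ((⟨v, Set.right_mem_Icc.mpr (hv.2 hu.1)⟩ : Set.Icc u v) ∈ Jr (Set.Icc u v)) ∧
      latCd (Set.Icc u v) = latCd L := by

  have huv : u ≤ v := hv.2 hu.1
  have hcu := comp_u hu
  have hcv := comp_v hv
  refine ⟨?_, ?_, ?_⟩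
  · -- u is meet-reducible in K
    have hMr := u_mem_mr hu
    obtain ⟨y, z, hy, hz, hne⟩ := id hMr
    have hyv : y ≤ v := hv.2 (mem_skel_of_upper hMr hy)
    have hzv : z ≤ v := hv.2 (mem_skel_of_upper hMr hz)
    refine ⟨⟨y, hy.lt.le, hyv⟩, ⟨z, hz.lt.le, hzv⟩, ?_, ?_, ?_⟩
    · exact ⟨Subtype.mk_lt_mk.mpr hy.lt, fun c h1 h2 =>
        hy.2 (Subtype.mk_lt_mk.mp h1) (Subtype.mk_lt_mk.mp h2)⟩
    · exact ⟨Subtype.mk_lt_mk.mpr hz.lt, fun c h1 h2 =>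
        hz.2 (Subtype.mk_lt_mk.mp h1) (Subtype.mk_lt_mk.mp h2)⟩
    · exact fun h => hne (congrArg Subtype.val h)
  · -- v is join-reducible in K
    have hJr := v_mem_jr hv
    obtain ⟨y, z, hy, hz, hne⟩ := id hJr
    have huy : u ≤ y := hu.2 (mem_skel_of_lower hJr hy)
    have huz : u ≤ z := hu.2 (mem_skel_of_lower hJr hz)
    refine ⟨⟨y, huy, hy.lt.le⟩, ⟨z, huz, hz.lt.le⟩, ?_, ?_, ?_⟩
    · exact ⟨Subtype.mk_lt_mk.mpr hy.lt, fun c h1 h2 =>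
        hy.2 (Subtype.mk_lt_mk.mp h1) (Subtype.mk_lt_mk.mp h2)⟩
    · exact ⟨Subtype.mk_lt_mk.mpr hz.lt, fun c h1 h2 =>
        hz.2 (Subtype.mk_lt_mk.mp h1) (Subtype.mk_lt_mk.mp h2)⟩
    · exact fun h => hne (congrArg Subtype.val h)
  · -- the density computation
    show (Nat.card (LatCon (Set.Icc u v)) : ℝ) / 2 ^ (Nat.card (Set.Icc u v) - 1) =
      (Nat.card (LatCon L) : ℝ) / 2 ^ (Nat.card L - 1)
    haveI : Nonempty (Set.Iic u) := ⟨⟨u, le_refl u⟩⟩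
    haveI : Nonempty (Set.Ici v) := ⟨⟨v, le_refl v⟩⟩
    haveI : Nonempty (Set.Icc u v) := ⟨⟨u, le_refl u, huv⟩⟩
    have hConL : Nat.card (LatCon L) = Nat.card (LatCon (Set.Iic u)) *
        (Nat.card (LatCon (Set.Icc u v)) * Nat.card (LatCon (Set.Ici v))) := by
      rw [Nat.card_congr (triEquiv huv hcu hcv), Nat.card_prod, Nat.card_prod]
    have hIic : Nat.card (LatCon (Set.Iic u)) = 2 ^ (Nat.card (Set.Iic u) - 1) :=
      card_latCon_chain _ (fun a b => chain_below hu a.val b.val a.2 b.2)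
    have hIci : Nat.card (LatCon (Set.Ici v)) = 2 ^ (Nat.card (Set.Ici v) - 1) :=
      card_latCon_chain _ (fun a b => chain_above hv a.val b.val a.2 b.2)
    have hIicN : Nat.card (Set.Iic u) = (Set.Iio u).ncard + 1 := by
      rw [Nat.card_coe_set_eq, ← Set.Iio_insert,
        Set.ncard_insert_of_notMem (by simp) (Set.toFinite _)]
    have hIciN : Nat.card (Set.Ici v) = (Set.Ioi v).ncard + 1 := by
      rw [Nat.card_coe_set_eq, ← Set.Ioi_insert,
        Set.ncard_insert_of_notMem (by simp) (Set.toFinite _)]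
    have huniv : (Set.univ : Set L) = Set.Iio u ∪ (Set.Icc u v ∪ Set.Ioi v) := by
      ext x
      simp only [Set.mem_univ, Set.mem_union, Set.mem_Iio, Set.mem_Icc, Set.mem_Ioi, true_iff]
      rcases hcu x with hx | hx
      · rcases lt_or_eq_of_le hx with h | h
        · exact Or.inl h
        · exact Or.inr (Or.inl ⟨le_of_eq h.symm, h ▸ huv⟩)
      · rcases hcv x with hx' | hx'
        · exact Or.inr (Or.inl ⟨hx, hx'⟩)
        · rcases lt_or_eq_of_le hx' with h | h
          · exact Or.inr (Or.inr h)
          · exact Or.inr (Or.inl ⟨hx, le_of_eq h.symm⟩)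
    have hd2 : Disjoint (Set.Icc u v) (Set.Ioi v) := by
      rw [Set.disjoint_left]
      rintro x ⟨-, h2⟩ h3
      exact h3.not_ge h2
    have hd1 : Disjoint (Set.Iio u) (Set.Icc u v ∪ Set.Ioi v) := by
      rw [Set.disjoint_left]
      rintro x hx (⟨h1, -⟩ | h2)
      · exact hx.not_ge h1
      · exact hx.not_ge (huv.trans h2.le)
    have hcardL : Nat.card L = (Set.Iio u).ncard + ((Set.Icc u v).ncard + (Set.Ioi v).ncard) := by
      rw [← Set.ncard_univ, huniv, Set.ncard_union_eq hd1 (Set.toFinite _) (Set.toFinite _),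
        Set.ncard_union_eq hd2 (Set.toFinite _) (Set.toFinite _)]
    have hKN : Nat.card (Set.Icc u v) = (Set.Icc u v).ncard := Nat.card_coe_set_eq _
    have hKpos : 0 < Nat.card (Set.Icc u v) := Nat.card_pos
    obtain ⟨k', hk'⟩ : ∃ k', Nat.card (Set.Icc u v) = k' + 1 :=
      ⟨Nat.card (Set.Icc u v) - 1, by omega⟩
    set p := (Set.Iio u).ncard with hp
    set q := (Set.Ioi v).ncard with hq
    have e1 : Nat.card (Set.Iic u) - 1 = p := by omega
    have e2 : Nat.card (Set.Ici v) - 1 = q := by omega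
    have e3 : Nat.card (Set.Icc u v) - 1 = k' := by omega
    have e4 : Nat.card L - 1 = p + (k' + q) := by omega
    rw [hConL, hIic, hIci, e1, e2, e3, e4]
    push_cast
    rw [pow_add, pow_add]
    have h2p : ((2:ℝ)) ^ p ≠ 0 := by positivity
    have h2q : ((2:ℝ)) ^ q ≠ 0 := by positivity
    have h2k : ((2:ℝ)) ^ k' ≠ 0 := by positivity
    field_simp
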